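/- Let q > 2 be even and let U be an intersecting family of polynomials over F_q of degree at most 2 with |U| = q^2 − ε, where ε < q·√q/4 − q/8 − √q/8. Then the graphs of the polynomials in U share a common point; that is, there exist α, β ∈ F_q such that f(α) = β for every f ∈ U. -/

import Mathlib

/-!
Write `f = a X² + b X + c` and sort `U` into columns by the linear coefficient `b`; within a
column `f ↦ a` is injective, since two members meet somewhere. In characteristic two a root of
`f + g` with `b ≠ b'` puts `(a + a') (c + c') / (b + b')²` into `W = {y² + y}`, an additive
subgroup of index two, so an affine map `a ↦ v a + w` sending more than `q / 2` points into `W`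
has `v = 0`.

The bound on `ε` makes more than `(q + 5) / 3` columns more than half full. Testing a large column
against another one shows that on it `c + c'` is a function `M` of `a + a'`. Testing it against
pairs of further large columns gives `M e = λ² M₃ (e / λ²)` for more than `(q - 1) / 3` distinct
scalars `λ²`, so the units `t` with `M (t y) = t M y` form a subgroup of index less than three in
`𝔽_qˣ`, which has odd order `q - 1`. Hence `M e = α² e`, so `f (α)` is constant on the column, and
the affine argument against that column spreads this to every `f ∈ U`.
-/

open Finset Polynomial

theorem Subgroup.eq_top_of_odd_card_lt_three_mul {G : Type*} [Group G] [Finite G]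
    (H : Subgroup G) (hodd : Odd (Nat.card G)) (hH : Nat.card G < 3 * Nat.card H) : H = ⊤ := by
  have hmul := H.card_mul_index
  have hidx : Odd H.index := Nat.Odd.of_mul_right (hmul ▸ hodd)
  have hlt : H.index < 3 := by
    by_contra! h
    nlinarith
  rw [← Subgroup.index_eq_one]
  obtain ⟨k, hk⟩ := hidx
  omega

def homogeneitySubgroup {R : Type*} [Monoid R] (M : R → R) : Subgroup Rˣ where
  carrier := {t | ∀ y, M (t * y) = t * M y}
  one_mem' := by simp
  mul_mem' {s t} hs ht y := by
    rw [Units.val_mul, mul_assoc, hs, ht, mul_assoc]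
  inv_mem' {t} ht y := by
    rw [← t.inv_mul_cancel_left (M _), ← ht, t.mul_inv_cancel_left]

theorem mem_homogeneitySubgroup {R : Type*} [Monoid R] {M : R → R} {t : Rˣ} :
    t ∈ homogeneitySubgroup M ↔ ∀ y, M (t * y) = t * M y := Iff.rfl

theorem Finset.exists_add_eq_of_card_lt {G : Type*} [AddGroup G] [Fintype G] [DecidableEq G]
    {s t : Finset G} (h : Fintype.card G < #s + #t) (x : G) : ∃ a ∈ s, ∃ b ∈ t, a + b = x := by
  have hcard : #(t.image (x - ·)) = #t := card_image_of_injective _ sub_right_injective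
  obtain ⟨a, ha⟩ := inter_nonempty_of_card_lt_card_add_card (subset_univ s)
    (subset_univ (t.image (x - ·))) (by rw [card_univ, hcard]; exact h)
  obtain ⟨has, hat⟩ := mem_inter.mp ha
  obtain ⟨b, hb, rfl⟩ := mem_image.mp hat
  exact ⟨x - b, has, b, hb, sub_add_cancel x b⟩

theorem eval_eq_of_natDegree_le_two {R : Type*} [CommSemiring R] {p : R[X]}
    (hp : p.natDegree ≤ 2) (x : R) :
    p.eval x = p.coeff 0 + p.coeff 1 * x + p.coeff 2 * x ^ 2 := by
  rw [eval_eq_sum_range' (n := 3) (by omega)]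
  simp [sum_range_succ]

section CharTwo

variable (F : Type*) [Field F] [CharP F 2]

def artinSchreier : F →+ F where
  toFun x := x ^ 2 + x
  map_zero' := by simp
  map_add' x y := by rw [CharTwo.add_sq]; ring

variable {F}

theorem sq_add_self_mem_range (x : F) : x ^ 2 + x ∈ (artinSchreier F).range := ⟨x, rfl⟩

theorem artinSchreier_ker : ((artinSchreier F).ker : Set F) = {0, 1} := by
  ext x
  simp only [SetLike.mem_coe, AddMonoidHom.mem_ker, Set.mem_insert_iff, Set.mem_singleton_iff]
  change x ^ 2 + x = 0 ↔ _
  rw [show x ^ 2 + x = x * (x + 1) by ring, mul_eq_zero, CharTwo.add_eq_zero]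

theorem coeff_two_mul_eval_div_sq_mem_range {p : F[X]} (hp : p.natDegree ≤ 2)
    (h1 : p.coeff 1 ≠ 0) {x : F} (hx : p.IsRoot x) (α : F) :
    p.coeff 2 * p.eval α / p.coeff 1 ^ 2 ∈ (artinSchreier F).range := by
  have hroot := hx.eq_zero
  rw [eval_eq_of_natDegree_le_two hp] at hroot
  have key : p.coeff 2 * p.eval α / p.coeff 1 ^ 2 =
      ((p.coeff 2 * x / p.coeff 1) ^ 2 + p.coeff 2 * x / p.coeff 1) +
      ((p.coeff 2 * α / p.coeff 1) ^ 2 + p.coeff 2 * α / p.coeff 1) := by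
    rw [eval_eq_of_natDegree_le_two hp]
    field_simp
    linear_combination p.coeff 2 * hroot -
      p.coeff 2 * (p.coeff 1 * x + p.coeff 2 * x ^ 2) * CharTwo.two_eq_zero (R := F)
  rw [key]
  exact add_mem (sq_add_self_mem_range _) (sq_add_self_mem_range _)

theorem injOn_div_add_sq {b₀ b₃ : F} (h : b₀ ≠ b₃) :
    Set.InjOn (fun b => ((b₀ + b) / (b + b₃)) ^ 2) {b₃}ᶜ := by
  intro x hx y hy hxy
  have hx₃ : x + b₃ ≠ 0 := by rwa [Ne, CharTwo.add_eq_zero]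
  have hy₃ : y + b₃ ≠ 0 := by rwa [Ne, CharTwo.add_eq_zero]
  rw [CharTwo.sq_inj, div_eq_div_iff hx₃ hy₃] at hxy
  have hprod : (b₀ + b₃) * (x + y) = 0 := by
    linear_combination -hxy + (b₀ * y + b₃ * x) * CharTwo.two_eq_zero (R := F)
  rcases mul_eq_zero.mp hprod with h₀ | h₀
  · exact absurd (CharTwo.add_eq_zero.mp h₀) h
  · exact CharTwo.add_eq_zero.mp h₀

variable [Fintype F]

theorem two_mul_card_artinSchreier_range :
    2 * Nat.card (artinSchreier F).range = Fintype.card F := by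
  have hker : Nat.card (artinSchreier F).ker = 2 := by
    rw [← SetLike.coe_sort_coe, artinSchreier_ker, Nat.card_coe_set_eq, Set.ncard_pair zero_ne_one]
  rw [← hker, ← AddSubgroup.index_ker, AddSubgroup.card_mul_index, Nat.card_eq_fintype_card]

theorem eq_zero_of_mul_add_mem_range {ι : Type*} {s : Finset ι} {x : ι → F}
    (hx : Set.InjOn x s) (hs : Fintype.card F < 2 * #s) {v w : F}
    (h : ∀ i ∈ s, v * x i + w ∈ (artinSchreier F).range) : v = 0 := by
  by_contra hv
  have hle : #s ≤ Nat.card (artinSchreier F).range := by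
    rw [← Set.ncard_coe_finset, ← SetLike.coe_sort_coe, Nat.card_coe_set_eq]
    refine Set.ncard_le_ncard_of_injOn _ h (fun i hi j hj hij => hx hi hj ?_) (Set.toFinite _)
    exact mul_left_cancel₀ hv (add_right_cancel hij)
  have := two_mul_card_artinSchreier_range (F := F)
  omega

theorem eq_zero_of_forall_mul_mem_range {v : F}
    (h : ∀ a, v * a ∈ (artinSchreier F).range) : v = 0 := by
  refine eq_zero_of_mul_add_mem_range (s := univ) (x := id) (Set.injOn_id _) ?_ (w := 0)
    (fun a _ => by simpa using h a)
  have := Fintype.card_pos (α := F)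
  rw [card_univ]
  omega

theorem eq_mul_comp_div_of_forall_mem_range {M₁ M₂ M₃ : F → F} {u v : F}
    (hu : u ≠ 0) (hv : v ≠ 0)
    (h₁₂ : ∀ e A, (A * M₁ e + e * M₂ A) / u ^ 2 ∈ (artinSchreier F).range)
    (h₂₃ : ∀ e A, (A * M₂ e + e * M₃ A) / v ^ 2 ∈ (artinSchreier F).range) (e : F) :
    M₁ e = (u / v) ^ 2 * M₃ (e / (u / v) ^ 2) := by
  set c := (u / v) ^ 2
  suffices (M₁ e + c * M₃ (e / c)) / u ^ 2 = 0 by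
    rw [div_eq_zero_iff, CharTwo.add_eq_zero] at this
    exact this.resolve_right (pow_ne_zero 2 hu)
  refine eq_zero_of_forall_mul_mem_range fun A => ?_
  convert add_mem (h₁₂ e A) (h₂₃ A (e / c)) using 1
  simp only [c]
  field_simp
  linear_combination (-(e * M₂ A * v ^ 2)) * CharTwo.two_eq_zero (R := F)

theorem odd_card_units_of_charTwo : Odd (Nat.card Fˣ) := by
  have heven : Even (Fintype.card F) :=
    Nat.even_iff.mpr (FiniteField.even_card_of_char_two (ringChar.eq F 2))
  rw [Nat.card_units, Nat.card_eq_fintype_card]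
  exact Nat.Even.sub_odd Fintype.card_pos heven odd_one

theorem eq_mul_of_forall_eq_mul_comp_div {M N : F → F} {C : Finset F} (hC0 : 0 ∉ C)
    (hC : Fintype.card F - 1 < 3 * #C) (hM : ∀ c ∈ C, ∀ e, M e = c * N (e / c))
    (hM0 : M 0 = 0) (e : F) : M e = M 1 * e := by
  classical
  obtain ⟨c₀, hc₀⟩ : C.Nonempty := Finset.card_pos.mp (by omega)
  have hc₀0 : c₀ ≠ 0 := ne_of_mem_of_not_mem hc₀ hC0
  -- `N y = M (c * y) / c` for every `c ∈ C`, so the ratios `c / c₀` make `M` homogeneous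
  have hhom : ∀ c ∈ C, ∀ y, M (c / c₀ * y) = c / c₀ * M y := by
    intro c hc y
    have hc0 : c ≠ 0 := ne_of_mem_of_not_mem hc hC0
    rw [hM c hc, hM c₀ hc₀ y]
    field_simp
  have hcard : #C ≤ Nat.card (homogeneitySubgroup M) := by
    rw [← SetLike.coe_sort_coe, Nat.card_eq_card_toFinset]
    refine (card_le_card fun c hc => ?_).trans (card_image_le (f := fun t : Fˣ => (t : F) * c₀))
    have hc0 : c ≠ 0 := ne_of_mem_of_not_mem hc hC0
    refine mem_image.mpr ⟨Units.mk0 (c / c₀) (div_ne_zero hc0 hc₀0), ?_, by simp [hc₀0]⟩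
    simpa [mem_homogeneitySubgroup] using hhom c hc
  have htop : homogeneitySubgroup M = ⊤ := by
    refine Subgroup.eq_top_of_odd_card_lt_three_mul _ odd_card_units_of_charTwo ?_
    rw [Nat.card_units, Nat.card_eq_fintype_card]
    omega
  rcases eq_or_ne e 0 with rfl | he
  · rw [hM0, mul_zero]
  · have := mem_homogeneitySubgroup.mp (htop ▸ Subgroup.mem_top (Units.mk0 e he)) 1
    simpa [mul_comm] using this

end CharTwo

structure IsIntersectingQuadratics {F : Type*} [Field F] (U : Finset F[X]) : Prop where
  natDegree_le : ∀ f ∈ U, f.natDegree ≤ 2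
  exists_eval_eq : ∀ f ∈ U, ∀ g ∈ U, ∃ x, f.eval x = g.eval x

section QuadraticFamilies

variable {F : Type*} [Field F] {U : Finset F[X]}

theorem IsIntersectingQuadratics.eq_of_coeff_eq (hU : IsIntersectingQuadratics U) {f g : F[X]}
    (hf : f ∈ U) (hg : g ∈ U) (h₁ : f.coeff 1 = g.coeff 1) (h₂ : f.coeff 2 = g.coeff 2) :
    f = g := by
  obtain ⟨x, hx⟩ := hU.exists_eval_eq f hf g hg
  rw [eval_eq_of_natDegree_le_two (hU.natDegree_le f hf),
    eval_eq_of_natDegree_le_two (hU.natDegree_le g hg), h₁, h₂, add_left_inj, add_left_inj] at hx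
  ext n
  match n with
  | 0 => exact hx
  | 1 => exact h₁
  | 2 => exact h₂
  | n + 3 =>
    rw [coeff_eq_zero_of_natDegree_lt ((hU.natDegree_le f hf).trans_lt (by omega)),
      coeff_eq_zero_of_natDegree_lt ((hU.natDegree_le g hg).trans_lt (by omega))]

variable [DecidableEq F]

def column (U : Finset F[X]) (b : F) : Finset F[X] := U.filter (·.coeff 1 = b)

theorem mem_column {b : F} {f : F[X]} : f ∈ column U b ↔ f ∈ U ∧ f.coeff 1 = b := mem_filter

theorem IsIntersectingQuadratics.injOn_coeff_two_column (hU : IsIntersectingQuadratics U) (b : F) :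
    Set.InjOn (·.coeff 2) (column U b : Set F[X]) := fun _ hf _ hg h =>
  hU.eq_of_coeff_eq (mem_column.mp hf).1 (mem_column.mp hg).1
    ((mem_column.mp hf).2.trans (mem_column.mp hg).2.symm) h

theorem IsIntersectingQuadratics.mul_eval_add_div_sq_mem_range [CharP F 2]
    (hU : IsIntersectingQuadratics U) {b b' : F} (hbb' : b ≠ b') {f g : F[X]}
    (hf : f ∈ column U b) (hg : g ∈ column U b') (α : F) :
    (f.coeff 2 + g.coeff 2) * (f.eval α + g.eval α) / (b + b') ^ 2 ∈ (artinSchreier F).range := by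
  obtain ⟨hfU, rfl⟩ := mem_column.mp hf
  obtain ⟨hgU, rfl⟩ := mem_column.mp hg
  obtain ⟨x, hx⟩ := hU.exists_eval_eq f hfU g hgU
  have hdeg : (f + g).natDegree ≤ 2 :=
    natDegree_add_le_of_degree_le (hU.natDegree_le f hfU) (hU.natDegree_le g hgU)
  have hroot : (f + g).IsRoot x := by
    rw [IsRoot, eval_add, hx, CharTwo.add_self_eq_zero]
  simpa using coeff_two_mul_eval_div_sq_mem_range hdeg
    (by rwa [coeff_add, Ne, CharTwo.add_eq_zero]) hroot α

theorem IsIntersectingQuadratics.mul_coeff_zero_add_div_sq_mem_range [CharP F 2]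
    (hU : IsIntersectingQuadratics U) {b b' : F} (hbb' : b ≠ b') {f g : F[X]}
    (hf : f ∈ column U b) (hg : g ∈ column U b') :
    (f.coeff 2 + g.coeff 2) * (f.coeff 0 + g.coeff 0) / (b + b') ^ 2 ∈ (artinSchreier F).range := by
  simpa only [coeff_zero_eq_eval_zero] using hU.mul_eval_add_div_sq_mem_range hbb' hf hg 0

variable [Fintype F]

theorem IsIntersectingQuadratics.card_column_le (hU : IsIntersectingQuadratics U) (b : F) :
    #(column U b) ≤ Fintype.card F := by
  rw [← card_image_of_injOn (hU.injOn_coeff_two_column b)]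
  exact card_le_univ _

theorem IsIntersectingQuadratics.exists_coeff_two_add_eq (hU : IsIntersectingQuadratics U)
    {b b' : F} (h : Fintype.card F < #(column U b) + #(column U b')) (t : F) :
    ∃ f ∈ column U b, ∃ g ∈ column U b', f.coeff 2 + g.coeff 2 = t := by
  rw [← card_image_of_injOn (hU.injOn_coeff_two_column b),
    ← card_image_of_injOn (hU.injOn_coeff_two_column b')] at h
  obtain ⟨_, ha, _, hb, rfl⟩ := exists_add_eq_of_card_lt h t
  obtain ⟨f, hf, rfl⟩ := mem_image.mp ha
  obtain ⟨g, hg, rfl⟩ := mem_image.mp hb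
  exact ⟨f, hf, g, hg, rfl⟩

def largeColumns (U : Finset F[X]) : Finset F :=
  univ.filter fun b => Fintype.card F < 2 * #(column U b)

theorem mem_largeColumns {b : F} :
    b ∈ largeColumns U ↔ Fintype.card F < 2 * #(column U b) := by
  simp [largeColumns]

theorem IsIntersectingQuadratics.card_mul_card_compl_largeColumns_le
    (hU : IsIntersectingQuadratics U) :
    Fintype.card F * #(largeColumns U)ᶜ + 2 * #U ≤ 2 * Fintype.card F ^ 2 := by
  have hsum : #U = ∑ b, #(column U b) := card_eq_sum_card_fiberwise fun f _ => mem_univ (f.coeff 1)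
  calc Fintype.card F * #(largeColumns U)ᶜ + 2 * #U
      = ∑ b, (2 * #(column U b) + if b ∈ (largeColumns U)ᶜ then Fintype.card F else 0) := by
        rw [sum_add_distrib, sum_ite_mem, univ_inter, sum_const, smul_eq_mul, ← mul_sum, hsum]
        ring
    _ ≤ ∑ _b : F, 2 * Fintype.card F := by
        refine sum_le_sum fun b _ => ?_
        have := hU.card_column_le b
        split_ifs with hb
        · have := mem_largeColumns.not.mp (mem_compl.mp hb)
          omega
        · omega
    _ = 2 * Fintype.card F ^ 2 := by
        rw [sum_const, card_univ, smul_eq_mul]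
        ring

theorem IsIntersectingQuadratics.add_five_lt_three_mul_card_largeColumns
    (hU : IsIntersectingQuadratics U) {ε : ℕ} (hcard : #U + ε = Fintype.card F ^ 2)
    (hε : 6 * ε + 5 * Fintype.card F < 2 * Fintype.card F ^ 2) :
    Fintype.card F + 5 < 3 * #(largeColumns U) := by
  have hcount := hU.card_mul_card_compl_largeColumns_le
  have hcompl := card_compl (largeColumns U)
  have hL : Fintype.card F * #(largeColumns U)ᶜ ≤ 2 * ε := by nlinarith
  have : 3 * #(largeColumns U)ᶜ + 5 < 2 * Fintype.card F := by
    by_contra! h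
    nlinarith [Nat.mul_le_mul_left (Fintype.card F) h]
  omega

variable [CharP F 2]

theorem IsIntersectingQuadratics.coeff_zero_add_eq_of_coeff_two_add_eq
    (hU : IsIntersectingQuadratics U) {b b' : F} (hbb' : b ≠ b')
    (hb' : Fintype.card F < 2 * #(column U b')) {f₁ f₂ f₃ f₄ : F[X]}
    (h₁ : f₁ ∈ column U b) (h₂ : f₂ ∈ column U b) (h₃ : f₃ ∈ column U b) (h₄ : f₄ ∈ column U b)
    (h : f₁.coeff 2 + f₂.coeff 2 = f₃.coeff 2 + f₄.coeff 2) :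
    f₁.coeff 0 + f₂.coeff 0 = f₃.coeff 0 + f₄.coeff 0 := by
  have hu : b + b' ≠ 0 := by rwa [Ne, CharTwo.add_eq_zero]
  suffices (f₁.coeff 0 + f₂.coeff 0 + (f₃.coeff 0 + f₄.coeff 0)) / (b + b') ^ 2 = 0 by
    rwa [div_eq_zero_iff, CharTwo.add_eq_zero, or_iff_left (pow_ne_zero 2 hu)] at this
  refine eq_zero_of_mul_add_mem_range (hU.injOn_coeff_two_column b') hb'
    (w := (f₁.coeff 2 * f₁.coeff 0 + f₂.coeff 2 * f₂.coeff 0 + f₃.coeff 2 * f₃.coeff 0 +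
      f₄.coeff 2 * f₄.coeff 0) / (b + b') ^ 2) fun g hg => ?_
  have hmem {f : F[X]} (hf : f ∈ column U b) := hU.mul_coeff_zero_add_div_sq_mem_range hbb' hf hg
  convert add_mem (add_mem (hmem h₁) (hmem h₂)) (add_mem (hmem h₃) (hmem h₄)) using 1
  linear_combination (-g.coeff 0 / (b + b') ^ 2) * h -
    ((g.coeff 0 * (f₃.coeff 2 + f₄.coeff 2) + 2 * g.coeff 2 * g.coeff 0) / (b + b') ^ 2) *
      CharTwo.two_eq_zero (R := F)

def IsColumnDifference (U : Finset F[X]) (b : F) (M : F → F) : Prop :=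
  ∀ f ∈ column U b, ∀ g ∈ column U b, f.coeff 0 + g.coeff 0 = M (f.coeff 2 + g.coeff 2)

theorem IsIntersectingQuadratics.exists_isColumnDifference (hU : IsIntersectingQuadratics U)
    {b b' : F} (hbb' : b ≠ b') (hb' : Fintype.card F < 2 * #(column U b')) :
    ∃ M, IsColumnDifference U b M := by
  have : ∀ e, ∃ m, ∀ f ∈ column U b, ∀ g ∈ column U b, f.coeff 2 + g.coeff 2 = e →
      f.coeff 0 + g.coeff 0 = m := by
    intro e
    by_cases he : ∃ f₀ ∈ column U b, ∃ g₀ ∈ column U b, f₀.coeff 2 + g₀.coeff 2 = e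
    · obtain ⟨f₀, hf₀, g₀, hg₀, rfl⟩ := he
      exact ⟨_, fun f hf g hg hfg =>
        hU.coeff_zero_add_eq_of_coeff_two_add_eq hbb' hb' hf hg hf₀ hg₀ hfg⟩
    · exact ⟨0, fun f hf g hg hfg => (he ⟨f, hf, g, hg, hfg⟩).elim⟩
  choose M hM using this
  exact ⟨M, fun f hf g hg => hM _ f hf g hg rfl⟩

theorem IsIntersectingQuadratics.isColumnDifference_mem_range (hU : IsIntersectingQuadratics U)
    {b b' : F} (hbb' : b ≠ b') (hb : Fintype.card F < 2 * #(column U b))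
    (hb' : Fintype.card F < 2 * #(column U b')) {M M' : F → F} (hM : IsColumnDifference U b M)
    (hM' : IsColumnDifference U b' M') (e A : F) :
    (A * M e + e * M' A) / (b + b') ^ 2 ∈ (artinSchreier F).range := by
  obtain ⟨f, hf, f', hf', rfl⟩ := hU.exists_coeff_two_add_eq (b := b) (b' := b) (by omega) e
  obtain ⟨g, hg, g', hg', rfl⟩ := hU.exists_coeff_two_add_eq (b := b') (b' := b') (by omega) A
  have hmem {f g : F[X]} (hf : f ∈ column U b) (hg : g ∈ column U b') :=
    hU.mul_coeff_zero_add_div_sq_mem_range hbb' hf hg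
  convert add_mem (add_mem (hmem hf hg) (hmem hf hg')) (add_mem (hmem hf' hg) (hmem hf' hg'))
    using 1
  rw [← hM f hf f' hf', ← hM' g hg g' hg']
  linear_combination (-(f.coeff 2 * f.coeff 0 + f'.coeff 2 * f'.coeff 0 + g.coeff 2 * g.coeff 0 +
    g'.coeff 2 * g'.coeff 0) / (b + b') ^ 2) * CharTwo.two_eq_zero (R := F)

theorem IsIntersectingQuadratics.isColumnDifference_eq_mul (hU : IsIntersectingQuadratics U)
    (hH : Fintype.card F + 5 < 3 * #(largeColumns U)) {b₀ : F} (hb₀ : b₀ ∈ largeColumns U)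
    {M : F → F} (hM : IsColumnDifference U b₀ M) (e : F) : M e = M 1 * e := by
  obtain ⟨b₃, hb₃, hb₃₀⟩ := exists_mem_ne (show 1 < #(largeColumns U) by omega) b₀
  obtain ⟨M₃, hM₃⟩ := hU.exists_isColumnDifference hb₃₀ (mem_largeColumns.mp hb₀)
  set T := largeColumns U \ {b₀, b₃}
  have hT : ∀ b ∈ T, b ∈ largeColumns U ∧ b ≠ b₀ ∧ b ≠ b₃ := by
    intro b hb
    simpa [T] using hb
  refine eq_mul_of_forall_eq_mul_comp_div (N := M₃)
    (C := T.image fun b => ((b₀ + b) / (b + b₃)) ^ 2) ?_ ?_ ?_ ?_ e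
  · simp only [mem_image, not_exists, not_and]
    intro b hb h0
    obtain ⟨-, hb₀', hb₃'⟩ := hT b hb
    rw [sq_eq_zero_iff, div_eq_zero_iff, CharTwo.add_eq_zero, CharTwo.add_eq_zero] at h0
    exact h0.elim (fun h => hb₀' h.symm) hb₃'
  · rw [card_image_of_injOn ((injOn_div_add_sq hb₃₀.symm).mono fun b hb => (hT b hb).2.2)]
    have h₁ : #(largeColumns U) - #{b₀, b₃} ≤ #T := le_card_sdiff _ _
    have h₂ : #({b₀, b₃} : Finset F) ≤ 2 := card_le_two
    have := Fintype.card_pos (α := F)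
    omega
  · simp only [mem_image, forall_exists_index, and_imp]
    rintro _ b₂ hb₂ rfl e
    obtain ⟨hb₂L, hb₂₀, hb₂₃⟩ := hT b₂ hb₂
    obtain ⟨M₂, hM₂⟩ := hU.exists_isColumnDifference hb₂₀ (mem_largeColumns.mp hb₀)
    refine eq_mul_comp_div_of_forall_mem_range (M₂ := M₂)
      (by rwa [Ne, CharTwo.add_eq_zero, eq_comm]) (by rwa [Ne, CharTwo.add_eq_zero]) ?_ ?_ e
    · exact hU.isColumnDifference_mem_range (Ne.symm hb₂₀) (mem_largeColumns.mp hb₀)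
        (mem_largeColumns.mp hb₂L) hM hM₂
    · exact hU.isColumnDifference_mem_range hb₂₃ (mem_largeColumns.mp hb₂L)
        (mem_largeColumns.mp hb₃) hM₂ hM₃
  · have := mem_largeColumns.mp hb₀
    obtain ⟨f, hf⟩ : (column U b₀).Nonempty := card_pos.mp (by omega)
    simpa only [CharTwo.add_self_eq_zero] using (hM f hf f hf).symm

theorem IsIntersectingQuadratics.exists_eval_eq_of_isColumnDifference
    (hU : IsIntersectingQuadratics U) {b₀ α : F} (hb₀ : b₀ ∈ largeColumns U)
    (hM : IsColumnDifference U b₀ (α ^ 2 * ·)) :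
    ∃ β, ∀ f ∈ U, f.eval α = β := by
  have hb₀' := mem_largeColumns.mp hb₀
  obtain ⟨g₀, hg₀⟩ : (column U b₀).Nonempty := card_pos.mp (by omega)
  have hcol : ∀ g ∈ column U b₀, g.eval α = g₀.eval α := by
    intro g hg
    obtain ⟨hgU, hgb⟩ := mem_column.mp hg
    obtain ⟨hg₀U, hg₀b⟩ := mem_column.mp hg₀
    rw [eval_eq_of_natDegree_le_two (hU.natDegree_le g hgU),
      eval_eq_of_natDegree_le_two (hU.natDegree_le g₀ hg₀U), hgb, hg₀b]
    linear_combination hM g hg g₀ hg₀ +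
      (g.coeff 2 * α ^ 2 - g₀.coeff 0) * CharTwo.two_eq_zero (R := F)
  refine ⟨g₀.eval α, fun f hf => ?_⟩
  by_cases hfb : f.coeff 1 = b₀
  · exact hcol f (mem_column.mpr ⟨hf, hfb⟩)
  have hu : f.coeff 1 + b₀ ≠ 0 := by rwa [Ne, CharTwo.add_eq_zero]
  suffices (f.eval α + g₀.eval α) / (f.coeff 1 + b₀) ^ 2 = 0 by
    rwa [div_eq_zero_iff, CharTwo.add_eq_zero, or_iff_left (pow_ne_zero 2 hu)] at this
  refine eq_zero_of_mul_add_mem_range (x := fun g => f.coeff 2 + g.coeff 2) (w := 0)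
    (fun g hg g' hg' h => hU.injOn_coeff_two_column b₀ hg hg' (add_left_cancel h)) hb₀'
    fun g hg => ?_
  have := hU.mul_eval_add_div_sq_mem_range hfb (mem_column.mpr ⟨hf, rfl⟩) hg α
  rw [hcol g hg] at this
  convert this using 1
  ring

theorem IsIntersectingQuadratics.exists_eval_eq_of_card_largeColumns
    (hU : IsIntersectingQuadratics U) (hH : Fintype.card F + 5 < 3 * #(largeColumns U)) :
    ∃ α β, ∀ f ∈ U, f.eval α = β := by
  obtain ⟨b₀, hb₀⟩ : (largeColumns U).Nonempty := card_pos.mp (by omega)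
  obtain ⟨b', hb', hb'₀⟩ := exists_mem_ne (show 1 < #(largeColumns U) by omega) b₀
  obtain ⟨M, hM⟩ := hU.exists_isColumnDifference hb'₀.symm (mem_largeColumns.mp hb')
  obtain ⟨α, hα⟩ := isSquare_of_charTwo' (M 1)
  refine ⟨α, hU.exists_eval_eq_of_isColumnDifference hb₀ fun f hf g hg => ?_⟩
  rw [hM f hf g hg, hU.isColumnDifference_eq_mul hH hb₀ hM, hα, sq]

end QuadraticFamilies

theorem six_mul_add_five_mul_lt_of_lt_sqrt {q ε : ℕ} (hq : 4 ≤ q)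
    (hε : (ε : ℝ) < q * √q / 4 - q / 8 - √q / 8) : 6 * ε + 5 * q < 2 * q ^ 2 := by
  have hs : 2 ≤ √(q : ℝ) := Real.le_sqrt_of_sq_le (by norm_num; exact_mod_cast hq)
  have hsq : √(q : ℝ) ^ 2 = q := Real.sq_sqrt (Nat.cast_nonneg q)
  suffices (6 * ε + 5 * q : ℝ) < 2 * q ^ 2 by exact_mod_cast this
  generalize √(q : ℝ) = s at hε hs hsq
  rw [← hsq] at hε ⊢
  -- `2 s⁴ - 5 s² - 3 s³ / 2 = s² (s - 2) (2 s + 5 / 2)`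
  nlinarith [mul_nonneg (mul_nonneg (sq_nonneg s) (sub_nonneg.mpr hs))
    (by positivity : (0 : ℝ) ≤ 2 * s + 5 / 2)]

/-- If `q > 2` is even and `U` is an intersecting family of polynomials over `F_q` of degree
at most `2` with `|U| = q^2 − ε` where `ε < q√q/4 − q/8 − √q/8`, then the graphs of the
polynomials in `U` share a common point. -/
theorem stmt11 (F : Type*) [Field F] [Fintype F]
    (heven : Even (Fintype.card F)) (hq : 2 < Fintype.card F)
    (U : Finset (Polynomial F)) (hdeg : ∀ f ∈ U, f.natDegree ≤ 2)
    (hint : ∀ f ∈ U, ∀ g ∈ U, ∃ x : F, f.eval x = g.eval x)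
    (ε : ℕ) (hcard : U.card + ε = Fintype.card F ^ 2)
    (hε : (ε : ℝ) < (Fintype.card F : ℝ) * Real.sqrt (Fintype.card F) / 4
      - (Fintype.card F : ℝ) / 8 - Real.sqrt (Fintype.card F) / 8) :
    ∃ α β : F, ∀ f ∈ U, f.eval α = β := by
  classical
  have : CharP F 2 :=
    ringChar.of_eq (FiniteField.even_card_iff_char_two.mpr (Nat.even_iff.mp heven))
  have hq4 : 4 ≤ Fintype.card F := by
    obtain ⟨k, hk⟩ := heven
    omega
  have hU : IsIntersectingQuadratics U := ⟨hdeg, hint⟩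
  exact hU.exists_eval_eq_of_card_largeColumns
    (hU.add_five_lt_three_mul_card_largeColumns hcard (six_mul_add_five_mul_lt_of_lt_sqrt hq4 hε))
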